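/- For fixed N ≥ 1, c > 0 (with c = |h_w|²/σ_w²), define ζ*(P) = 1 - γ(N, N(1 + 1/(cP)) ln(cP+1))/Γ(N) + γ(N, (N/(cP)) ln(cP+1))/Γ(N) for P > 0. Then lim_{P→0⁺} ζ*(P) = 1 and lim_{P→0⁺} dζ*/dP = -c · Nᴺ e^{-N}/Γ(N). -/

import Mathlib

open Real Filter Set Topology

/-- Lower incomplete gamma function `γ(s,x) = ∫₀ˣ e^{-t} t^{s-1} dt`. -/
noncomputable def lowerGamma (s x : ℝ) : ℝ := ∫ t in (0:ℝ)..x, Real.exp (-t) * t ^ (s - 1)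

/-!
Write `u = c P`. Both arguments of `γ(N, ·)` tend to `N` as `u → 0⁺` because
`log (1 + u) / u → 1`, so the two incomplete gamma terms cancel in the limit. Their
`u`-derivatives are `N (u - log (1 + u)) / u² → N / 2` and
`N (u / (1 + u) - log (1 + u)) / u² → -N / 2`, both read off the second-order Taylor bound
for `log (1 + u)`. With `∂ₓ γ(N, x) = e^{-x} x^{N-1}` the chain rule gives
`dζ*/du → -Nᴺ e^{-N} / Γ(N)`, and `dζ*/dP = c · dζ*/du`.
-/

lemma abs_sub_log_div_sq_sub_half_le {u : ℝ} (hu : |u| < 1) (hu0 : u ≠ 0) :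
    |(u - log (u + 1)) / u ^ 2 - 1 / 2| ≤ |u| / (1 - |u|) := by
  have h := abs_log_sub_add_sum_range_le (x := -u) (by rwa [abs_neg]) 2
  norm_num [Finset.sum_range_succ, add_comm 1 u] at h
  have hpos : 0 < u ^ 2 := by positivity
  have : (u - log (u + 1)) / u ^ 2 - 1 / 2 = -(-u + u ^ 2 / 2 + log (u + 1)) / u ^ 2 := by
    field_simp; ring
  rw [this, abs_div, abs_neg, abs_of_pos hpos, div_le_iff₀ hpos]
  exact h.trans_eq (by rw [← sq_abs u]; ring)

lemma tendsto_sub_log_div_sq :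
    Tendsto (fun u => (u - log (u + 1)) / u ^ 2) (𝓝[≠] 0) (𝓝 (1 / 2)) := by
  rw [tendsto_iff_norm_sub_tendsto_zero]
  have hb : Tendsto (fun u : ℝ => |u| / (1 - |u|)) (𝓝[≠] 0) (𝓝 0) := by
    have : ContinuousAt (fun u : ℝ => |u| / (1 - |u|)) 0 := by fun_prop (disch := norm_num)
    simpa using this.tendsto.mono_left nhdsWithin_le_nhds
  refine squeeze_zero' (.of_forall fun _ => norm_nonneg _) ?_ hb
  have hsmall : ∀ᶠ u : ℝ in 𝓝[≠] 0, |u| < 1 :=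
    nhdsWithin_le_nhds <| (continuous_abs.tendsto 0).eventually_lt_const (by norm_num)
  filter_upwards [hsmall, self_mem_nhdsWithin] with u hu hu0
  exact abs_sub_log_div_sq_sub_half_le hu hu0

lemma tendsto_log_add_one_div_self : Tendsto (fun u => log (u + 1) / u) (𝓝[≠] 0) (𝓝 1) := by
  have h := (tendsto_id.mono_left nhdsWithin_le_nhds).mul tendsto_sub_log_div_sq
  have h1 := (tendsto_const_nhds (x := (1 : ℝ))).sub h
  rw [zero_mul, sub_zero] at h1
  refine h1.congr' ?_
  filter_upwards [self_mem_nhdsWithin] with u (hu : u ≠ 0)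
  simp only [id]
  field_simp
  ring

lemma tendsto_div_add_one_sub_log_div_sq :
    Tendsto (fun u => (u / (u + 1) - log (u + 1)) / u ^ 2) (𝓝[≠] 0) (𝓝 (-1 / 2)) := by
  have h : Tendsto (fun u : ℝ => 1 / (u + 1)) (𝓝[≠] 0) (𝓝 1) := by
    have : ContinuousAt (fun u : ℝ => 1 / (u + 1)) 0 := by fun_prop (disch := norm_num)
    simpa using this.tendsto.mono_left nhdsWithin_le_nhds
  have hne : ∀ᶠ u : ℝ in 𝓝[≠] 0, u + 1 ≠ 0 :=
    nhdsWithin_le_nhds <| (continuous_add_const 1).continuousAt.eventually_ne (by norm_num)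
  have h1 := tendsto_sub_log_div_sq.sub h
  rw [show (1 / 2 : ℝ) - 1 = -1 / 2 by norm_num] at h1
  refine h1.congr' ?_
  filter_upwards [self_mem_nhdsWithin, hne] with u (hu : u ≠ 0) hu1
  field_simp
  ring

lemma continuous_exp_neg_mul_rpow_sub_one {s : ℝ} (hs : 1 ≤ s) :
    Continuous fun t : ℝ => exp (-t) * t ^ (s - 1) :=
  (continuous_exp.comp continuous_neg).mul (continuous_rpow_const (by linarith))

lemma hasDerivAt_lowerGamma {s : ℝ} (hs : 1 ≤ s) (x : ℝ) :
    HasDerivAt (lowerGamma s) (exp (-x) * x ^ (s - 1)) x := by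
  have hcont := continuous_exp_neg_mul_rpow_sub_one hs
  exact intervalIntegral.integral_hasDerivAt_right (hcont.intervalIntegrable 0 x)
    hcont.aestronglyMeasurable.stronglyMeasurableAtFilter hcont.continuousAt

lemma hasDerivAt_log_add_one {u : ℝ} (hu : u + 1 ≠ 0) :
    HasDerivAt (fun u => log (u + 1)) (1 / (u + 1)) u := by
  simpa using ((hasDerivAt_id u).add_const 1).log hu

lemma hasDerivAt_mul_one_add_one_div_mul_log (s : ℝ) {u : ℝ} (hu : 0 < u) :
    HasDerivAt (fun u => s * (1 + 1 / u) * log (u + 1))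
      (s * ((u - log (u + 1)) / u ^ 2)) u := by
  have hlog := hasDerivAt_log_add_one (by positivity : u + 1 ≠ 0)
  have hinv := (hasDerivAt_const u 1).fun_div (hasDerivAt_id' u) hu.ne'
  have h := ((hinv.const_add 1).const_mul s).mul hlog
  exact h.congr_deriv (by field_simp; ring)

lemma hasDerivAt_div_mul_log (s : ℝ) {u : ℝ} (hu : 0 < u) :
    HasDerivAt (fun u => s / u * log (u + 1))
      (s * ((u / (u + 1) - log (u + 1)) / u ^ 2)) u := by
  have hlog := hasDerivAt_log_add_one (by positivity : u + 1 ≠ 0)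
  have h := ((hasDerivAt_const u s).fun_div (hasDerivAt_id' u) hu.ne').mul hlog
  exact h.congr_deriv (by field_simp; ring)

lemma tendsto_mul_one_add_one_div_mul_log (s : ℝ) :
    Tendsto (fun u => s * (1 + 1 / u) * log (u + 1)) (𝓝[≠] 0) (𝓝 s) := by
  have h : Tendsto (fun u : ℝ => s * ((u + 1) * (log (u + 1) / u))) (𝓝[≠] 0)
      (𝓝 (s * ((0 + 1) * 1))) :=
    ((((continuous_add_const 1).tendsto 0).mono_left nhdsWithin_le_nhds).mul
      tendsto_log_add_one_div_self).const_mul s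
  rw [zero_add, one_mul, mul_one] at h
  refine h.congr' ?_
  filter_upwards [self_mem_nhdsWithin] with u (hu : u ≠ 0)
  field_simp

lemma tendsto_div_mul_log (s : ℝ) :
    Tendsto (fun u => s / u * log (u + 1)) (𝓝[≠] 0) (𝓝 s) := by
  have h := tendsto_log_add_one_div_self.const_mul s
  rw [mul_one] at h
  exact h.congr fun u => by ring

/-- `ζ*(P) = minDetectionError N (c * P)`: the variable is `u = c P`, and `N` may be real. -/
noncomputable def minDetectionError (s u : ℝ) : ℝ :=
  1 - lowerGamma s (s * (1 + 1 / u) * log (u + 1)) / Gamma s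
    + lowerGamma s (s / u * log (u + 1)) / Gamma s

lemma tendsto_minDetectionError {s : ℝ} (hs : 1 ≤ s) :
    Tendsto (minDetectionError s) (𝓝[≠] 0) (𝓝 1) := by
  have hγ : Continuous (lowerGamma s) :=
    continuous_iff_continuousAt.mpr fun x => (hasDerivAt_lowerGamma hs x).continuousAt
  have h := ((tendsto_const_nhds (x := (1 : ℝ))).sub
    (((hγ.tendsto s).comp (tendsto_mul_one_add_one_div_mul_log s)).div_const (Gamma s))).add
    (((hγ.tendsto s).comp (tendsto_div_mul_log s)).div_const (Gamma s))
  rwa [sub_add_cancel] at h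

lemma tendsto_deriv_minDetectionError {s : ℝ} (hs : 1 ≤ s) :
    Tendsto (deriv (minDetectionError s)) (𝓝[>] 0) (𝓝 (-(s ^ s * exp (-s)) / Gamma s)) := by
  set γ' : ℝ → ℝ := fun x => exp (-x) * x ^ (s - 1)
  have hγ' : Continuous γ' := continuous_exp_neg_mul_rpow_sub_one hs
  have hderiv : ∀ u > 0, HasDerivAt (minDetectionError s)
      (-(γ' (s * (1 + 1 / u) * log (u + 1)) * (s * ((u - log (u + 1)) / u ^ 2)) / Gamma s)
        + γ' (s / u * log (u + 1)) * (s * ((u / (u + 1) - log (u + 1)) / u ^ 2)) / Gamma s) u :=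
    fun u hu => ((((hasDerivAt_lowerGamma hs _).comp u
      (hasDerivAt_mul_one_add_one_div_mul_log s hu)).div_const (Gamma s)).const_sub 1).add
      (((hasDerivAt_lowerGamma hs _).comp u (hasDerivAt_div_mul_log s hu)).div_const (Gamma s))
  have hle : 𝓝[>] (0 : ℝ) ≤ 𝓝[≠] 0 := nhdsGT_le_nhdsNE 0
  have hupper := ((hγ'.tendsto s).comp ((tendsto_mul_one_add_one_div_mul_log s).mono_left hle)).mul
    ((tendsto_sub_log_div_sq.mono_left hle).const_mul s)
  have hlower := ((hγ'.tendsto s).comp ((tendsto_div_mul_log s).mono_left hle)).mul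
    ((tendsto_div_add_one_sub_log_div_sq.mono_left hle).const_mul s)
  have hlim := (hupper.div_const (Gamma s)).neg.add (hlower.div_const (Gamma s))
  have hval : -(γ' s * (s * (1 / 2)) / Gamma s) + γ' s * (s * (-1 / 2)) / Gamma s
      = -(s ^ s * exp (-s)) / Gamma s := by
    simp only [γ', rpow_sub_one (by positivity : s ≠ 0)]
    field_simp
    ring
  rw [hval] at hlim
  exact hlim.congr' (eventually_nhdsWithin_of_forall fun u hu => (hderiv u hu).deriv.symm)

theorem stmt_4 (N : ℕ) (hN : 1 ≤ N) (c : ℝ) (hc : 0 < c) :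
    Tendsto (fun P : ℝ => 1
        - lowerGamma N ((N : ℝ) * (1 + 1 / (c * P)) * Real.log (c * P + 1)) / Real.Gamma N
        + lowerGamma N ((N : ℝ) / (c * P) * Real.log (c * P + 1)) / Real.Gamma N)
      (nhdsWithin 0 (Set.Ioi 0)) (nhds 1)
    ∧ Tendsto (deriv (fun P : ℝ => 1
        - lowerGamma N ((N : ℝ) * (1 + 1 / (c * P)) * Real.log (c * P + 1)) / Real.Gamma N
        + lowerGamma N ((N : ℝ) / (c * P) * Real.log (c * P + 1)) / Real.Gamma N))
      (nhdsWithin 0 (Set.Ioi 0))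
      (nhds (-c * (N : ℝ) ^ N * Real.exp (-(N : ℝ)) / Real.Gamma N)) := by
  change Tendsto (fun P => minDetectionError N (c * P)) _ _
    ∧ Tendsto (deriv fun P => minDetectionError N (c * P)) _ _
  have hs : (1 : ℝ) ≤ N := by exact_mod_cast hN
  have hcP : Tendsto (c * ·) (𝓝[>] 0) (𝓝[>] 0) :=
    tendsto_iff_comap.mpr (comap_mulLeft_nhdsGT_zero hc).ge
  refine ⟨(tendsto_minDetectionError hs).comp (hcP.mono_right (nhdsGT_le_nhdsNE 0)), ?_⟩
  have h := ((tendsto_deriv_minDetectionError hs).comp hcP).const_mul c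
  rw [rpow_natCast, mul_div_assoc', mul_neg, ← neg_mul, ← mul_assoc] at h
  exact h.congr fun P => (deriv_comp_mul_left c (minDetectionError N) P).symm
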